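/- Let ρ be a nonnegative initial mass configuration on ℤ² with finite total mass and bounded support, and let T be a legal toppling scheme for ρ. Then as k → ∞ the configurations ν_k and the emitted-mass functions u_k converge pointwise to limits ν and u; moreover the limiting configuration satisfies ν(x) ≤ 1 for all x ∈ ℤ² and ν = ρ + L_{M,1}u. -/

import Mathlib

open MeasureTheory Filter Metric Real
open scoped Topology ENNReal

noncomputable section

namespace TruncatedSandpile

/-- The plane `ℝ²` with the Euclidean norm. -/
abbrev R2 : Type := EuclideanSpace ℝ (Fin 2)

/-- The Euclidean inner product `θ · x` on `ℝ²`. -/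
def dotp (θ x : R2) : ℝ := @inner ℝ _ _ θ x

/-- The point of the rescaled lattice `(1/n)ℤ²` corresponding to `z ∈ ℤ²`. -/
def pt (n : ℕ) (z : ℤ × ℤ) : R2 :=
  (WithLp.equiv 2 (Fin 2 → ℝ)).symm ![(z.1 : ℝ) / n, (z.2 : ℝ) / n]

/-- The square `y + [-1/(2n), 1/(2n)]²`. -/
def latSq (n : ℕ) (y : R2) : Set R2 :=
  {x : R2 | ∀ i : Fin 2, |x i - y i| ≤ 1 / (2 * (n : ℝ))}

/-- `F_n(y) = n² · μ(y^□ ∩ (B_M \ B_{r/n}))`. -/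
def Fn (r M : ℝ) (n : ℕ) (y : R2) : ℝ :=
  (n : ℝ) ^ 2 * (volume (latSq n y ∩ (ball (0 : R2) M \ ball 0 (r / n)))).toReal

/-- The constant `k_n`. -/
def kn (α r M : ℝ) (n : ℕ) : ℝ :=
  (n : ℝ) ^ (2 - α) / 4 *
    ((∫ y in ball (0 : R2) M, ‖y‖ ^ (-α)) -
      ((n : ℝ) ^ 2)⁻¹ * ∑' z : ℤ × ℤ, if z ≠ 0 then Fn r M n (pt n z) / ‖pt n z‖ ^ α else 0)

/-- The unnormalized jump weights defining `p_n`. -/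
def pnRaw (α r M : ℝ) (n : ℕ) (z : ℤ × ℤ) : ℝ :=
  if z = 0 then 0 else
    kn α r M n * (if ‖pt n z‖ = 1 / n then 1 else 0) +
      Fn r M n (pt n z) / ((n : ℝ) ^ (2 + α) * ‖pt n z‖ ^ (2 + α))

/-- The normalizing constant `c_n`, making `p_n` a probability. -/
def cseq (α r M : ℝ) (n : ℕ) : ℝ := (∑' z : ℤ × ℤ, pnRaw α r M n z)⁻¹

/-- The jump probability `p_n` on `(1/n)ℤ²` (indexed by `ℤ²`). -/
def pn (α r M : ℝ) (n : ℕ) (z : ℤ × ℤ) : ℝ := cseq α r M n * pnRaw α r M n z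

/-- `c = lim_{n→∞} c_n`. -/
def climit (α r M : ℝ) : ℝ := limUnder atTop (cseq α r M)

/-- `ψ_M(θ) = cc ∫_{B_M} (1 - cos(θ·y))/|y|^{2+α} dy`. -/
def psiM (α M cc : ℝ) (θ : R2) : ℝ :=
  cc * ∫ y in ball (0 : R2) M, (1 - Real.cos (dotp θ y)) / ‖y‖ ^ (2 + α)

/-- `ψ_{M,n}(θ) = n^α Σ_y p_n(y)(1 - cos(θ·y))`. -/
def psiMn (α r M : ℝ) (n : ℕ) (θ : R2) : ℝ :=
  (n : ℝ) ^ α * ∑' z : ℤ × ℤ, pn α r M n z * (1 - Real.cos (dotp θ (pt n z)))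

/-- The continuous Green's function `G_M` (with constant `cc` and base point `x₀`). -/
def GM (α M cc : ℝ) (x₀ x : R2) : ℝ :=
  (1 / (2 * π) ^ 2) *
    ∫ θ : R2, (Real.cos (dotp θ x) - Real.cos (dotp θ x₀)) / psiM α M cc θ

/-- The box `[-nπ, nπ]²`. -/
def box (n : ℕ) : Set R2 := {θ : R2 | ∀ i : Fin 2, |θ i| ≤ (n : ℝ) * π}

/-- The rescaled discrete Green's function `G_{M,n}`. -/
def GMn (α r M : ℝ) (n : ℕ) (x₀ x : R2) : ℝ :=
  (1 / (2 * π) ^ 2) *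
    ∫ θ in box n, (Real.cos (dotp θ x) - Real.cos (dotp θ x₀)) / psiMn α r M n θ

/-- `σ_M² = cc ∫_{B_M} |y|^{-α} dy`. -/
def sigmaM2 (α M cc : ℝ) : ℝ := cc * ∫ y in ball (0 : R2) M, ‖y‖ ^ (-α)

/-- `σ_{M,n}² = n^α Σ_y p_n(y)|y|²`. -/
def sigmaMn2 (α r M : ℝ) (n : ℕ) : ℝ :=
  (n : ℝ) ^ α * ∑' z : ℤ × ℤ, pn α r M n z * ‖pt n z‖ ^ 2

/-- The truncated fractional Laplacian `L_M` (with constant `cc`). -/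
def LM (α M cc : ℝ) (f : R2 → ℝ) (x : R2) : ℝ :=
  cc / 2 * ∫ y in ball (0 : R2) M, (f (x + y) + f (x - y) - 2 * f x) / ‖y‖ ^ (2 + α)

/-- The discrete operator `L_{M,n}` acting on lattice functions `g : ℤ² → ℝ`. -/
def LMnD (α r M : ℝ) (n : ℕ) (g : ℤ × ℤ → ℝ) (z : ℤ × ℤ) : ℝ :=
  (n : ℝ) ^ α * ∑' w : ℤ × ℤ, pn α r M n w * (g (z + w) - g z)

/-- The discrete operator `L_{M,n}` acting on functions on `ℝ²`. -/
def LMnF (α r M : ℝ) (n : ℕ) (f : R2 → ℝ) (x : R2) : ℝ :=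
  (n : ℝ) ^ α * ∑' w : ℤ × ℤ, pn α r M n w * (f (x + pt n w) - f x)

/-- The continuous obstacle `γ`. -/
def gammaC (α M cc : ℝ) (x₀ : R2) (ρ : R2 → ℝ) (x : R2) : ℝ :=
  -‖x‖ ^ 2 / sigmaM2 α M cc - ∫ y : R2, GM α M cc x₀ (x - y) * ρ y

/-- The discrete obstacle `γ_n` (as a function on `ℤ²`, representing `(1/n)ℤ²`). -/
def gammaD (α r M : ℝ) (n : ℕ) (x₀ : R2) (ρ : R2 → ℝ) (z : ℤ × ℤ) : ℝ :=
  -‖pt n z‖ ^ 2 / sigmaMn2 α r M n -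
    ((n : ℝ) ^ 2)⁻¹ * ∑' w : ℤ × ℤ, GMn α r M n x₀ (pt n z - pt n w) * ρ (pt n w)

/-- `f ∈ L¹_loc` is superharmonic w.r.t. `L_M` on an open set `Ω` if
`∫ f · L_M φ ≤ 0` for all nonnegative smooth compactly supported `φ` with support in `Ω`. -/
def Superharmonic (α M cc : ℝ) (f : R2 → ℝ) (Ω : Set R2) : Prop :=
  ∀ φ : R2 → ℝ, ContDiff ℝ (⊤ : ℕ∞) φ → HasCompactSupport φ → (∀ x, 0 ≤ φ x) →
    tsupport φ ⊆ Ω → (∫ x : R2, f x * LM α M cc φ x) ≤ 0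

/-- The least superharmonic majorant `s` of the continuous obstacle. -/
def sMaj (α M cc : ℝ) (x₀ : R2) (ρ : R2 → ℝ) (x : R2) : ℝ :=
  sInf {v : ℝ | ∃ f : R2 → ℝ, Continuous f ∧ Superharmonic α M cc f Set.univ ∧
    (∀ y, gammaC α M cc x₀ ρ y ≤ f y) ∧ v = f x}

/-- The discrete majorant `s_n` of the discrete obstacle. -/
def sMajD (α r M : ℝ) (n : ℕ) (x₀ : R2) (ρ : R2 → ℝ) (z : ℤ × ℤ) : ℝ :=
  sInf {v : ℝ | ∃ f : ℤ × ℤ → ℝ, (∀ w, LMnD α r M n f w ≤ 0) ∧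
    (∀ w, gammaD α r M n x₀ ρ w ≤ f w) ∧ v = f z}

/-- The discrete odometer `u_n = s_n - γ_n`. -/
def uD (α r M : ℝ) (n : ℕ) (x₀ : R2) (ρ : R2 → ℝ) (z : ℤ × ℤ) : ℝ :=
  sMajD α r M n x₀ ρ z - gammaD α r M n x₀ ρ z

/-- The discrete final distribution `ν_n = ρ_n + L_{M,n} u_n`. -/
def nuD (α r M : ℝ) (n : ℕ) (x₀ : R2) (ρ : R2 → ℝ) (z : ℤ × ℤ) : ℝ :=
  ρ (pt n z) + LMnD α r M n (uD α r M n x₀ ρ) z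

/-- The lattice point `x^{::}` of `(1/n)ℤ²` whose half-open square
`(x^{::} - 1/(2n), x^{::} + 1/(2n)]²` contains `x` (ties broken to the right). -/
def nearPt (n : ℕ) (x : R2) : ℤ × ℤ := (⌈(n : ℝ) * x 0 - 1 / 2⌉, ⌈(n : ℝ) * x 1 - 1 / 2⌉)

/-- The extension `g^□` of a lattice function `g` to `ℝ²`: `g^□(x) = g(x^{::})`. -/
def extQ (n : ℕ) (g : ℤ × ℤ → ℝ) (x : R2) : ℝ := g (nearPt n x)

/-- The constant `β_n = (2/(π σ_M²))(c/c_n - 1)`. -/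
def betan (α r M : ℝ) (n : ℕ) : ℝ :=
  2 / (π * sigmaM2 α M (climit α r M)) * (climit α r M / cseq α r M n - 1)

/-- The auxiliary function `h_M(x) = (1/(π²σ_M²)) ∫_{B_{|x|/M} \ B₁} cos(θ·ω)/|θ|² dθ`. -/
def hM (α M cc : ℝ) (ω x : R2) : ℝ :=
  1 / (π ^ 2 * sigmaM2 α M cc) *
    ∫ θ in ball (0 : R2) (‖x‖ / M) \ ball 0 1, Real.cos (dotp θ ω) / ‖θ‖ ^ 2

/-- Toppling the (full) site `x`: `x` keeps mass 1 and distributes the excess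
according to `p₁`. -/
def topple (α r M : ℝ) (m : ℤ × ℤ → ℝ) (x : ℤ × ℤ) : ℤ × ℤ → ℝ :=
  fun y => if y = x then 1 else m y + (m x - 1) * pn α r M 1 (y - x)

/-- The mass configuration after the first `k` topplings of the scheme `T`,
started from `ρ`. -/
def conf (α r M : ℝ) (ρ : ℤ × ℤ → ℝ) (T : ℕ → ℤ × ℤ) : ℕ → ℤ × ℤ → ℝ
  | 0 => ρ
  | k + 1 => topple α r M (conf α r M ρ T k) (T k)

/-- The total mass emitted from each site during the first `k` topplings. -/
def emitted (α r M : ℝ) (ρ : ℤ × ℤ → ℝ) (T : ℕ → ℤ × ℤ) : ℕ → ℤ × ℤ → ℝ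
  | 0 => fun _ => 0
  | k + 1 => fun y =>
      emitted α r M ρ T k y + if y = T k then conf α r M ρ T k y - 1 else 0

/-- A legal toppling scheme: only full sites are toppled, and every site that is
full at some stage is toppled infinitely often afterwards. -/
def LegalScheme (α r M : ℝ) (ρ : ℤ × ℤ → ℝ) (T : ℕ → ℤ × ℤ) : Prop :=
  (∀ k, 1 ≤ conf α r M ρ T k (T k)) ∧
  (∀ k x, 1 ≤ conf α r M ρ T k x → ∀ N, ∃ j, N ≤ j ∧ T j = x)


/-!
Write `p = p₁` and `L = L_{M,1}`. Toppling a site `s` with excess mass `e` adds `e · L δ_s` to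
the configuration, so `ν_k = ρ + L u_k`. Mass is conserved and a site keeps mass `≥ 1` once it
has been toppled, so at most `Σ ρ` distinct sites are ever toppled and all topplings take place
in a finite set `B`. For a symmetric kernel `L|·|² ≡ σ² = Σ_w p(w)|w|² ≥ 1`, so each toppling
raises the potential `Σ_{y ∈ B} ν_k(y)|y|²` by `σ² e`; the potential is at most
`(Σ ρ) Σ_{y ∈ B} |y|²`, hence the nondecreasing `u_k` are bounded and converge, and
`ν_k = ρ + L u_k` converges with them because `p` has finite support. A limit `ν(x) > 1` is
impossible, since `x` would be toppled, back to mass `1`, infinitely often.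
-/

lemma summable_mul_of_finite_support {ι : Type*} {p : ι → ℝ} (hp : (Function.support p).Finite)
    (f : ι → ℝ) : Summable fun w => p w * f w :=
  summable_of_hasFiniteSupport (hp.subset (Function.support_mul_subset_left _ _))

lemma finite_range_of_card_image_range_le {β : Type*} [DecidableEq β] {f : ℕ → β} (N : ℕ)
    (h : ∀ K, ((Finset.range K).image f).card ≤ N) : (Set.range f).Finite := by
  by_contra hinf
  obtain ⟨Q, hQ, hcard⟩ := Set.Infinite.exists_subset_card_eq hinf (N + 1)
  rw [← Set.image_univ] at hQ
  obtain ⟨S, -, rfl⟩ := Finset.subset_set_image_iff.mp hQ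
  obtain ⟨K, hK⟩ := S.exists_nat_subset_range
  have := (Finset.card_le_card (Finset.image_subset_image (f := f) hK)).trans (h K)
  omega

section Generator

variable {G : Type*} [AddCommGroup G] {p : G → ℝ}

def generator (p g : G → ℝ) (z : G) : ℝ := ∑' w, p w * (g (z + w) - g z)

lemma generator_eq_sum (hp : (Function.support p).Finite) (g : G → ℝ) (z : G) :
    generator p g z = ∑ w ∈ hp.toFinset, p w * (g (z + w) - g z) :=
  tsum_eq_sum fun w hw => by rw [show p w = 0 by simpa using hw, zero_mul]

lemma generator_eq_tsum_sub (hp : (Function.support p).Finite) (hp1 : ∑' w, p w = 1)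
    (g : G → ℝ) (z : G) : generator p g z = ∑' w, p w * g (z + w) - g z := by
  simp only [generator, mul_sub]
  rw [(summable_mul_of_finite_support hp _).tsum_sub
    (summable_mul_of_finite_support hp fun _ => g z), tsum_mul_right, hp1, one_mul]

lemma generator_add (hp : (Function.support p).Finite) (f g : G → ℝ) :
    generator p (f + g) = generator p f + generator p g := by
  funext z
  simp only [generator, Pi.add_apply]
  rw [← (summable_mul_of_finite_support hp _).tsum_add (summable_mul_of_finite_support hp _)]
  exact tsum_congr fun w => by ring

lemma tendsto_generator {ι : Type*} {l : Filter ι} (hp : (Function.support p).Finite)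
    {f : ι → G → ℝ} {g : G → ℝ} (hf : ∀ y, Tendsto (fun k => f k y) l (𝓝 (g y))) (z : G) :
    Tendsto (fun k => generator p (f k) z) l (𝓝 (generator p g z)) := by
  simp only [generator_eq_sum hp]
  exact tendsto_finsetSum _ fun w _ => ((hf _).sub (hf z)).const_mul _

variable [DecidableEq G]

lemma generator_single (hp : (Function.support p).Finite) (hp1 : ∑' w, p w = 1)
    (s : G) (e : ℝ) (y : G) :
    generator p (Pi.single s e) y = e * p (s - y) - (Pi.single s e : G → ℝ) y := by
  rw [generator_eq_tsum_sub hp hp1, tsum_eq_single (s - y) fun w hw => ?_]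
  · simp [mul_comm]
  · rw [Pi.single_eq_of_ne (by rintro rfl; simp at hw), mul_zero]

lemma hasSum_generator_single (hp : (Function.support p).Finite) (hp1 : ∑' w, p w = 1)
    (s : G) (e : ℝ) : HasSum (generator p (Pi.single s e)) 0 := by
  have hshift : HasSum (fun y => e * p (s - y)) e := by
    simpa [hp1] using ((Equiv.subLeft s).hasSum_iff.mpr
      (summable_of_hasFiniteSupport hp).hasSum).mul_left e
  have hsingle : HasSum (Pi.single s e : G → ℝ) e := by
    simpa only [← Pi.single_apply] using hasSum_ite_eq s e
  rw [show generator p (Pi.single s e) = _ from funext (generator_single hp hp1 s e),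
    ← sub_self e]
  exact hshift.sub hsingle

lemma sum_generator_single_mul (hp : (Function.support p).Finite) (hp1 : ∑' w, p w = 1)
    (hsymm : ∀ w, p (-w) = p w) {B : Finset G} {s : G} (hs : s ∈ B)
    (hB : ∀ w, p w ≠ 0 → s + w ∈ B) (e : ℝ) (g : G → ℝ) :
    ∑ y ∈ B, generator p (Pi.single s e) y * g y = e * generator p g s := by
  have hshift : ∑ y ∈ B, p (s - y) * g y = ∑' w, p w * g (s + w) := by
    rw [← tsum_eq_sum (L := SummationFilter.unconditional G) fun y hy => ?_]
    · rw [← (Equiv.addLeft s).tsum_eq]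
      simp [hsymm]
    · have : p (y - s) = 0 := by_contra fun h => hy (by simpa using hB _ h)
      rw [← neg_sub, hsymm, this, zero_mul]
  simp only [generator_single hp hp1, sub_mul, Finset.sum_sub_distrib, mul_assoc,
    ← Finset.mul_sum, hshift, Pi.single_apply, ite_mul, zero_mul, Finset.sum_ite_eq', if_pos hs,
    generator_eq_tsum_sub hp hp1, mul_sub]

end Generator

section SquaredNorm

variable {p : ℤ × ℤ → ℝ}

def sqNorm (z : ℤ × ℤ) : ℝ := (z.1 : ℝ) ^ 2 + (z.2 : ℝ) ^ 2

lemma sqNorm_nonneg (z : ℤ × ℤ) : 0 ≤ sqNorm z := by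
  unfold sqNorm
  positivity

lemma one_le_sqNorm {z : ℤ × ℤ} (hz : z ≠ 0) : 1 ≤ sqNorm z := by
  have : (1 : ℤ) ≤ z.1 ^ 2 + z.2 ^ 2 := by
    rcases z with ⟨a, b⟩
    rcases eq_or_ne a 0 with rfl | ha
    · have hb : b ≠ 0 := by simpa using hz
      nlinarith [sq_nonneg b, Int.one_le_abs hb, sq_abs b]
    · nlinarith [sq_nonneg b, Int.one_le_abs ha, sq_abs a]
  have h : ((1 : ℤ) : ℝ) ≤ ((z.1 ^ 2 + z.2 ^ 2 : ℤ) : ℝ) := Int.cast_le.mpr this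
  simpa [sqNorm] using h

lemma tsum_mul_eq_zero_of_odd (hsymm : ∀ w, p (-w) = p w) {f : ℤ × ℤ → ℝ}
    (hf : ∀ w, f (-w) = -f w) : ∑' w, p w * f w = 0 := by
  have h := (Equiv.neg (ℤ × ℤ)).tsum_eq fun w => p w * f w
  simp only [Equiv.neg_apply, hsymm, hf, mul_neg, tsum_neg] at h
  linarith

lemma generator_sqNorm (hp : (Function.support p).Finite) (hsymm : ∀ w, p (-w) = p w)
    (z : ℤ × ℤ) : generator p sqNorm z = ∑' w, p w * sqNorm w := by
  have hexp : ∀ w, p w * (sqNorm (z + w) - sqNorm z) =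
      2 * z.1 * (p w * w.1) + 2 * z.2 * (p w * w.2) + p w * sqNorm w := by
    intro w
    simp only [sqNorm, Prod.fst_add, Prod.snd_add, Int.cast_add]
    ring
  have h1 : ∑' w : ℤ × ℤ, p w * w.1 = 0 := tsum_mul_eq_zero_of_odd hsymm fun w => by simp
  have h2 : ∑' w : ℤ × ℤ, p w * w.2 = 0 := tsum_mul_eq_zero_of_odd hsymm fun w => by simp
  have S := summable_mul_of_finite_support hp
  rw [generator, tsum_congr hexp, (((S _).mul_left _).add ((S _).mul_left _)).tsum_add (S _),
    ((S _).mul_left _).tsum_add ((S _).mul_left _), tsum_mul_left, tsum_mul_left, h1, h2]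
  ring

end SquaredNorm

structure IsJumpKernel {G : Type*} [AddGroup G] (p : G → ℝ) : Prop where
  nonneg : ∀ z, 0 ≤ p z
  map_zero : p 0 = 0
  finite_support : (Function.support p).Finite
  tsum_eq_one : ∑' z, p z = 1
  symm : ∀ z, p (-z) = p z

lemma IsJumpKernel.one_le_tsum_mul_sqNorm {p : ℤ × ℤ → ℝ} (hp : IsJumpKernel p) :
    1 ≤ ∑' w, p w * sqNorm w := by
  rw [← hp.tsum_eq_one]
  refine (summable_of_hasFiniteSupport hp.finite_support).tsum_le_tsum (fun w => ?_)
    (summable_mul_of_finite_support hp.finite_support _)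
  rcases eq_or_ne w 0 with rfl | hw
  · simp [hp.map_zero]
  · exact le_mul_of_one_le_right (hp.nonneg w) (one_le_sqNorm hw)

section JumpProbability

variable {α r M : ℝ} {n : ℕ}

lemma pt_apply_zero (n : ℕ) (z : ℤ × ℤ) : pt n z 0 = z.1 / n := by
  simp [pt, WithLp.equiv_symm_apply]

lemma pt_apply_one (n : ℕ) (z : ℤ × ℤ) : pt n z 1 = z.2 / n := by
  simp [pt, WithLp.equiv_symm_apply]

lemma pt_neg (n : ℕ) (z : ℤ × ℤ) : pt n (-z) = -pt n z := by
  ext i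
  fin_cases i <;> simp [pt, WithLp.equiv_symm_apply, neg_div]

lemma norm_pt_one_zero (n : ℕ) : ‖pt n (1, 0)‖ = 1 / n := by
  rw [EuclideanSpace.norm_eq, Fin.sum_univ_two, pt_apply_zero, pt_apply_one]
  simp

lemma Fn_neg (r M : ℝ) (n : ℕ) (y : R2) : Fn r M n (-y) = Fn r M n y := by
  have h : latSq n (-y) ∩ (ball (0 : R2) M \ ball 0 (r / n)) =
      Neg.neg ⁻¹' (latSq n y ∩ (ball (0 : R2) M \ ball 0 (r / n))) := by
    ext x
    simp only [latSq, Set.mem_inter_iff, Set.mem_preimage, Set.mem_ofPred_eq, Set.mem_sdiff,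
      mem_ball_zero_iff, norm_neg, PiLp.neg_apply]
    refine and_congr (forall_congr' fun i => ?_) Iff.rfl
    rw [← abs_neg]
    ring_nf
  rw [Fn, h, Measure.measure_preimage_neg, Fn]

lemma pnRaw_neg (α r M : ℝ) (n : ℕ) (z : ℤ × ℤ) : pnRaw α r M n (-z) = pnRaw α r M n z := by
  simp [pnRaw, pt_neg, Fn_neg]

lemma Fn_nonneg (r M : ℝ) (n : ℕ) (y : R2) : 0 ≤ Fn r M n y :=
  mul_nonneg (by positivity) ENNReal.toReal_nonneg

lemma pnRaw_nonneg (hk : 0 ≤ kn α r M n) (z : ℤ × ℤ) : 0 ≤ pnRaw α r M n z := by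
  unfold pnRaw
  have := Fn_nonneg r M n (pt n z)
  split_ifs <;> positivity

lemma kn_le_pnRaw (α r M : ℝ) (n : ℕ) : kn α r M n ≤ pnRaw α r M n (1, 0) := by
  have := Fn_nonneg r M n (pt n (1, 0))
  simp only [pnRaw, Prod.mk_eq_zero, one_ne_zero, false_and, if_false, norm_pt_one_zero, if_true,
    mul_one, le_add_iff_nonneg_right]
  positivity

lemma abs_pt_apply_le_of_pnRaw_ne_zero {z : ℤ × ℤ} (h : pnRaw α r M n z ≠ 0) (i : Fin 2) :
    |pt n z i| ≤ |M| + 1 / n := by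
  have hcoord : ∀ x : R2, |x i| ≤ ‖x‖ := fun x => PiLp.norm_apply_le x i
  unfold pnRaw at h
  split_ifs at h
  · exact absurd rfl h
  · linarith [hcoord (pt n z), abs_nonneg M]
  · have hF : Fn r M n (pt n z) ≠ 0 := fun hF => h (by simp [hF])
    obtain ⟨x, hsq, hx, -⟩ := nonempty_of_measure_ne_zero
      (ENNReal.toReal_ne_zero.mp (right_ne_zero_of_mul hF)).1
    have hxi : |x i - pt n z i| ≤ 1 / (2 * n) := hsq i
    have hxM : ‖x‖ < M := mem_ball_zero_iff.mp hx
    have : 1 / (2 * (n : ℝ)) ≤ 1 / n := by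
      rw [mul_comm, ← div_div]
      exact half_le_self (by positivity)
    calc |pt n z i| ≤ |x i| + |x i - pt n z i| := by
          have := abs_sub_abs_le_abs_sub (pt n z i) (x i)
          rw [abs_sub_comm (pt n z i)] at this
          linarith
      _ ≤ |M| + 1 / n := by linarith [hcoord x, le_abs_self M]

lemma mem_Icc_of_abs_div_le (hn : n ≠ 0) {a : ℤ} {R : ℝ} (h : |(a : ℝ) / n| ≤ R) :
    a ∈ Set.Icc (-⌈n * R⌉) ⌈n * R⌉ := by
  have hn' : (0 : ℝ) < n := by positivity
  rw [abs_div, Nat.abs_cast, div_le_iff₀ hn', abs_le] at h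
  have hceil := Int.le_ceil ((n : ℝ) * R)
  have hlo : ((-⌈(n : ℝ) * R⌉ : ℤ) : ℝ) ≤ a := by push_cast; linarith [h.1, mul_comm (n : ℝ) R]
  have hhi : (a : ℝ) ≤ ⌈(n : ℝ) * R⌉ := by linarith [h.2, mul_comm (n : ℝ) R]
  exact ⟨Int.cast_le.mp hlo, Int.cast_le.mp hhi⟩

lemma finite_support_pnRaw (hn : n ≠ 0) : (Function.support (pnRaw α r M n)).Finite := by
  set N := ⌈n * (|M| + 1 / n)⌉
  refine ((Set.finite_Icc (-N) N).prod (Set.finite_Icc (-N) N)).subset fun z hz => ?_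
  have h0 := abs_pt_apply_le_of_pnRaw_ne_zero hz 0
  have h1 := abs_pt_apply_le_of_pnRaw_ne_zero hz 1
  rw [pt_apply_zero] at h0
  rw [pt_apply_one] at h1
  exact ⟨mem_Icc_of_abs_div_le hn h0, mem_Icc_of_abs_div_le hn h1⟩

lemma isJumpKernel_pn (hn : n ≠ 0) (hk : 0 < kn α r M n) : IsJumpKernel (pn α r M n) := by
  have hfin := finite_support_pnRaw (α := α) (r := r) (M := M) hn
  have hpos : 0 < ∑' z, pnRaw α r M n z :=
    hk.trans_le <| (kn_le_pnRaw α r M n).trans <|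
      (summable_of_hasFiniteSupport hfin).le_tsum (1, 0) fun z _ => pnRaw_nonneg hk.le z
  refine ⟨fun z => mul_nonneg (inv_nonneg.mpr hpos.le) (pnRaw_nonneg hk.le z), by simp [pn, pnRaw],
    hfin.subset (Function.support_mul_subset_right _ _), ?_, fun z => by simp only [pn, pnRaw_neg]⟩
  simp only [pn, tsum_mul_left, cseq]
  exact inv_mul_cancel₀ hpos.ne'

lemma LMnD_one : LMnD α r M 1 = generator (pn α r M 1) := by
  funext g z
  simp [LMnD, generator]

end JumpProbability

section Toppling

variable {α r M : ℝ} {ρ : ℤ × ℤ → ℝ} {T : ℕ → ℤ × ℤ}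

lemma topple_eq_add_generator_single (hp : IsJumpKernel (pn α r M 1)) (m : ℤ × ℤ → ℝ)
    (s : ℤ × ℤ) : topple α r M m s = m + generator (pn α r M 1) (Pi.single s (m s - 1)) := by
  funext y
  rw [Pi.add_apply, generator_single hp.finite_support hp.tsum_eq_one]
  rcases eq_or_ne y s with rfl | hy
  · simp [topple, hp.map_zero]
  · rw [topple, if_neg hy, Pi.single_eq_of_ne hy, ← hp.symm (s - y), neg_sub]
    ring

lemma conf_succ (hp : IsJumpKernel (pn α r M 1)) (k : ℕ) :
    conf α r M ρ T (k + 1) = conf α r M ρ T k +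
      generator (pn α r M 1) (Pi.single (T k) (conf α r M ρ T k (T k) - 1)) :=
  topple_eq_add_generator_single hp _ _

lemma emitted_succ (k : ℕ) : emitted α r M ρ T (k + 1) =
    emitted α r M ρ T k + Pi.single (T k) (conf α r M ρ T k (T k) - 1) := by
  funext y
  rcases eq_or_ne y (T k) with rfl | hy
  · simp [emitted]
  · simp [emitted, hy]

lemma conf_eq_add_generator_emitted (hp : IsJumpKernel (pn α r M 1)) :
    ∀ k, conf α r M ρ T k = ρ + generator (pn α r M 1) (emitted α r M ρ T k)
  | 0 => by
    funext y
    simp [conf, emitted, generator]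
  | k + 1 => by
    rw [conf_succ hp, emitted_succ, generator_add hp.finite_support, ← add_assoc,
      ← conf_eq_add_generator_emitted hp k]

lemma hasSum_conf (hp : IsJumpKernel (pn α r M 1)) {m : ℝ} (hρ : HasSum ρ m) :
    ∀ k, HasSum (conf α r M ρ T k) m
  | 0 => hρ
  | k + 1 => by
    rw [conf_succ hp, ← add_zero m]
    exact (hasSum_conf hp hρ k).add
      (hasSum_generator_single hp.finite_support hp.tsum_eq_one _ _)

lemma le_topple (hp : ∀ z, 0 ≤ pn α r M 1 z) {m : ℤ × ℤ → ℝ} {s y : ℤ × ℤ} (hs : 1 ≤ m s)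
    (hy : y ≠ s) : m y ≤ topple α r M m s y := by
  rw [topple, if_neg hy]
  nlinarith [hp (y - s)]

lemma conf_nonneg (hp : ∀ z, 0 ≤ pn α r M 1 z) (hρ0 : ∀ x, 0 ≤ ρ x)
    (hT : LegalScheme α r M ρ T) : ∀ k x, 0 ≤ conf α r M ρ T k x
  | 0, x => hρ0 x
  | k + 1, x => by
    rcases eq_or_ne x (T k) with rfl | hx
    · simp [conf, topple]
    · exact (conf_nonneg hp hρ0 hT k x).trans (le_topple hp (hT.1 k) hx)

lemma one_le_conf_of_lt (hp : ∀ z, 0 ≤ pn α r M 1 z) (hT : LegalScheme α r M ρ T) {j k : ℕ}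
    (hjk : j < k) : 1 ≤ conf α r M ρ T k (T j) := by
  induction k, hjk using Nat.le_induction with
  | base => simp [conf, topple]
  | succ k _ ih =>
    rcases eq_or_ne (T j) (T k) with h | h
    · simp [conf, topple, h]
    · exact ih.trans (le_topple hp (hT.1 k) h)

lemma card_image_range_le (hp : IsJumpKernel (pn α r M 1)) (hρ0 : ∀ x, 0 ≤ ρ x) {m : ℝ}
    (hρ : HasSum ρ m) (hT : LegalScheme α r M ρ T) (K : ℕ) :
    (((Finset.range K).image T).card : ℝ) ≤ m :=
  calc (((Finset.range K).image T).card : ℝ) = ∑ x ∈ (Finset.range K).image T, 1 := by simp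
    _ ≤ ∑ x ∈ (Finset.range K).image T, conf α r M ρ T K x := Finset.sum_le_sum fun x hx => by
      obtain ⟨j, hj, rfl⟩ := Finset.mem_image.mp hx
      exact one_le_conf_of_lt hp.nonneg hT (Finset.mem_range.mp hj)
    _ ≤ m := sum_le_hasSum _ (fun x _ => conf_nonneg hp.nonneg hρ0 hT K x) (hasSum_conf hp hρ K)

lemma finite_range_of_legalScheme (hp : IsJumpKernel (pn α r M 1)) (hρ0 : ∀ x, 0 ≤ ρ x)
    {m : ℝ} (hρ : HasSum ρ m) (hT : LegalScheme α r M ρ T) : (Set.range T).Finite :=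
  finite_range_of_card_image_range_le ⌊m⌋₊ fun K =>
    Nat.le_floor (card_image_range_le hp hρ0 hρ hT K)

lemma sum_conf_succ_mul_sqNorm (hp : IsJumpKernel (pn α r M 1)) {B : Finset (ℤ × ℤ)} {k : ℕ}
    (hTB : T k ∈ B) (hB : ∀ w, pn α r M 1 w ≠ 0 → T k + w ∈ B) :
    ∑ y ∈ B, conf α r M ρ T (k + 1) y * sqNorm y = ∑ y ∈ B, conf α r M ρ T k y * sqNorm y +
      (conf α r M ρ T k (T k) - 1) * ∑' w, pn α r M 1 w * sqNorm w := by
  simp only [conf_succ hp, Pi.add_apply, add_mul, Finset.sum_add_distrib,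
    sum_generator_single_mul hp.finite_support hp.tsum_eq_one hp.symm hTB hB,
    generator_sqNorm hp.finite_support hp.symm]

lemma tsum_mul_sqNorm_mul_emitted_le (hp : IsJumpKernel (pn α r M 1))
    (hT : LegalScheme α r M ρ T) {B : Finset (ℤ × ℤ)} (hTB : ∀ k, T k ∈ B)
    (hB : ∀ k w, pn α r M 1 w ≠ 0 → T k + w ∈ B) :
    ∀ k x, (∑' w, pn α r M 1 w * sqNorm w) * emitted α r M ρ T k x ≤
      ∑ y ∈ B, conf α r M ρ T k y * sqNorm y - ∑ y ∈ B, ρ y * sqNorm y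
  | 0, x => by simp [emitted, conf]
  | k + 1, x => by
    set e := conf α r M ρ T k (T k) - 1
    have he : (Pi.single (T k) e : ℤ × ℤ → ℝ) x ≤ e := by
      rw [Pi.single_apply]
      split_ifs <;> linarith [hT.1 k]
    have hσ := hp.one_le_tsum_mul_sqNorm
    have ih := tsum_mul_sqNorm_mul_emitted_le hp hT hTB hB k x
    rw [emitted_succ, Pi.add_apply, sum_conf_succ_mul_sqNorm hp (hTB k) (hB k), mul_add]
    nlinarith

open scoped Pointwise in
lemma bddAbove_emitted (hp : IsJumpKernel (pn α r M 1)) (hρ0 : ∀ x, 0 ≤ ρ x) {m : ℝ}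
    (hρ : HasSum ρ m) (hT : LegalScheme α r M ρ T) (x : ℤ × ℤ) :
    BddAbove (Set.range fun k => emitted α r M ρ T k x) := by
  set B := (finite_range_of_legalScheme hp hρ0 hρ hT).toFinset + insert 0 hp.finite_support.toFinset
  have hB : ∀ k w, w ∈ insert 0 hp.finite_support.toFinset → T k + w ∈ B :=
    fun k w hw => Finset.add_mem_add (by simp) hw
  have hσ := hp.one_le_tsum_mul_sqNorm
  refine ⟨(∑ y ∈ B, m * sqNorm y - ∑ y ∈ B, ρ y * sqNorm y) / ∑' w, pn α r M 1 w * sqNorm w, ?_⟩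
  rintro _ ⟨k, rfl⟩
  rw [le_div_iff₀ (by linarith), mul_comm]
  refine (tsum_mul_sqNorm_mul_emitted_le hp hT (fun k => by simpa using hB k 0 (by simp))
    (fun k w hw => hB k w (by simp [hw])) k x).trans (sub_le_sub_right ?_ _)
  have hle : ∀ y, conf α r M ρ T k y ≤ m := fun y =>
    le_hasSum (hasSum_conf hp hρ k) y fun z _ => conf_nonneg hp.nonneg hρ0 hT k z
  exact Finset.sum_le_sum fun y _ => mul_le_mul_of_nonneg_right (hle y) (sqNorm_nonneg y)

lemma emitted_monotone (hT : LegalScheme α r M ρ T) (x : ℤ × ℤ) :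
    Monotone fun k => emitted α r M ρ T k x :=
  monotone_nat_of_le_succ fun k => by
    rw [emitted_succ, Pi.add_apply]
    refine le_add_of_nonneg_right ?_
    rw [Pi.single_apply]
    split_ifs <;> linarith [hT.1 k]

lemma le_one_of_tendsto_conf (hT : LegalScheme α r M ρ T) {x : ℤ × ℤ} {a : ℝ}
    (h : Tendsto (fun k => conf α r M ρ T k x) atTop (𝓝 a)) : a ≤ 1 := by
  by_contra! ha
  obtain ⟨k₀, hk₀⟩ := eventually_atTop.mp (h.eventually_const_lt ha)
  obtain ⟨j, hj, rfl⟩ := hT.2 k₀ _ (hk₀ k₀ le_rfl).le k₀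
  simpa [conf, topple] using hk₀ (j + 1) (by omega)

end Toppling

theorem sandpile_limit_exists_general
    (α r M : ℝ)
    (hk : 0 < kn α r M 1)
    (ρ : ℤ × ℤ → ℝ) (hρ0 : ∀ x, 0 ≤ ρ x) (hρfin : (Function.support ρ).Finite)
    (T : ℕ → ℤ × ℤ) (hT : LegalScheme α r M ρ T) :
    ∃ ν u : ℤ × ℤ → ℝ,
      (∀ x, Tendsto (fun k => conf α r M ρ T k x) atTop (𝓝 (ν x))) ∧
      (∀ x, Tendsto (fun k => emitted α r M ρ T k x) atTop (𝓝 (u x))) ∧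
      (∀ x, ν x ≤ 1) ∧
      (∀ x, ν x = ρ x + LMnD α r M 1 u x) := by
  have hp := isJumpKernel_pn one_ne_zero hk
  have hρ : HasSum ρ (∑' y, ρ y) := (summable_of_hasFiniteSupport hρfin).hasSum
  have hu : ∀ x, Tendsto (fun k => emitted α r M ρ T k x) atTop
      (𝓝 (⨆ k, emitted α r M ρ T k x)) := fun x =>
    tendsto_atTop_ciSup (emitted_monotone hT x) (bddAbove_emitted hp hρ0 hρ hT x)
  have hν : ∀ x, Tendsto (fun k => conf α r M ρ T k x) atTop
      (𝓝 (ρ x + generator (pn α r M 1) (fun y => ⨆ k, emitted α r M ρ T k y) x)) := fun x => by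
    simpa only [conf_eq_add_generator_emitted hp, Pi.add_apply] using
      (tendsto_generator hp.finite_support hu x).const_add (ρ x)
  exact ⟨_, _, hν, hu, fun x => le_one_of_tendsto_conf hT (hν x), fun x => by rw [LMnD_one]⟩

/-- **Existence of the limiting configuration and odometer** for any legal toppling
scheme: the configurations and emitted-mass functions converge, the limit configuration
is everywhere `≤ 1` and satisfies `ν = ρ + L_{M,1} u`. -/
theorem sandpile_limit_exists
    (α r M : ℝ) (hα : α ∈ Set.Ioo (1 : ℝ) 2) (hr : 0 < r) (hrM : r < M)
    (hk : 0 < kn α r M 1)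
    (ρ : ℤ × ℤ → ℝ) (hρ0 : ∀ x, 0 ≤ ρ x) (hρfin : (Function.support ρ).Finite)
    (T : ℕ → ℤ × ℤ) (hT : LegalScheme α r M ρ T) :
    ∃ ν u : ℤ × ℤ → ℝ,
      (∀ x, Tendsto (fun k => conf α r M ρ T k x) atTop (𝓝 (ν x))) ∧
      (∀ x, Tendsto (fun k => emitted α r M ρ T k x) atTop (𝓝 (u x))) ∧
      (∀ x, ν x ≤ 1) ∧
      (∀ x, ν x = ρ x + LMnD α r M 1 u x) :=
  sandpile_limit_exists_general α r M hk ρ hρ0 hρfin T hT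

end TruncatedSandpile
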